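/- The distributionally robust Bellman equation has a unique solution: there exists exactly one function V* : S → ℝ such that (T V*)(s) = V*(s) for every s ∈ S. -/

import Mathlib

open MeasureTheory

/-- The distributionally robust Bellman operator:
`(T V)(s) = sup_{d ∈ Ξ s} ∫ max_{a ∈ A} ( r s a + ε a + γ Σ_{s'} q s a s' · V s' ) dd(ε)`. -/
noncomputable def bellmanDS {S A : Type*} [Fintype S] [Fintype A] [Nonempty A]
    (r : S → A → ℝ) (q : S → A → S → ℝ) (γ : ℝ)
    (Ξ : S → Set (Measure (A → ℝ))) (V : S → ℝ) (s : S) : ℝ :=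
  sSup ((fun d : Measure (A → ℝ) =>
    ∫ ε, (Finset.univ.sup' Finset.univ_nonempty
      (fun a : A => r s a + ε a + γ * ∑ s', q s a s' * V s')) ∂d) '' Ξ s)

/-- A finite `sup'` of integrable real functions is integrable. -/
lemma integrable_finset_sup' {ι α : Type*} [MeasurableSpace α] {μ : Measure α}
    {t : Finset ι} (ht : t.Nonempty) {f : ι → α → ℝ}
    (hf : ∀ i ∈ t, Integrable (f i) μ) :
    Integrable (fun x => t.sup' ht (fun i => f i x)) μ := by
  induction ht using Finset.Nonempty.cons_induction with
  | singleton a =>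
      simp only [Finset.sup'_singleton]
      exact hf a (Finset.mem_singleton_self a)
  | cons a s h hs ih =>
      simp only [Finset.sup'_cons hs]
      exact (hf a (Finset.mem_cons_self a s)).sup
        (ih fun i hi => hf i (Finset.mem_cons_of_mem hi))

section Aux

variable {S A : Type*} [Fintype S] [Nonempty S] [Fintype A] [Nonempty A]
    (r : S → A → ℝ) (q : S → A → S → ℝ) (γ : ℝ)
    (Ξ : S → Set (Measure (A → ℝ)))

/-- Integrability of the Bellman integrand. -/
lemma bellman_integrand_integrable
    (hprob : ∀ s, ∀ d ∈ Ξ s, IsProbabilityMeasure d)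
    (hint : ∀ s, ∀ d ∈ Ξ s, ∀ a : A, Integrable (fun ε : A → ℝ => ε a) d)
    (V : S → ℝ) (s : S) {d : Measure (A → ℝ)} (hd : d ∈ Ξ s) :
    Integrable (fun ε : A → ℝ => Finset.univ.sup' Finset.univ_nonempty
      (fun a : A => r s a + ε a + γ * ∑ s', q s a s' * V s')) d := by
  haveI := hprob s d hd
  refine integrable_finset_sup' Finset.univ_nonempty (fun a _ => ?_)
  have : (fun ε : A → ℝ => r s a + ε a + γ * ∑ s', q s a s' * V s')
      = fun ε : A → ℝ => (ε a) + (r s a + γ * ∑ s', q s a s' * V s') := by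
    funext ε; ring
  rw [this]
  exact (hint s d hd a).add (integrable_const _)

/-- The set whose supremum defines the Bellman operator is bounded above. -/
lemma bellman_bddAbove
    (hprob : ∀ s, ∀ d ∈ Ξ s, IsProbabilityMeasure d)
    (hint : ∀ s, ∀ d ∈ Ξ s, ∀ a : A, Integrable (fun ε : A → ℝ => ε a) d)
    (hbdd : ∀ s, ∃ M : ℝ, ∀ d ∈ Ξ s,
      ∫ ε, (Finset.univ.sup' Finset.univ_nonempty (fun a : A => ε a)) ∂d ≤ M)
    (V : S → ℝ) (s : S) :
    BddAbove ((fun d : Measure (A → ℝ) =>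
      ∫ ε, (Finset.univ.sup' Finset.univ_nonempty
        (fun a : A => r s a + ε a + γ * ∑ s', q s a s' * V s')) ∂d) '' Ξ s) := by
  obtain ⟨M, hM⟩ := hbdd s
  set C : ℝ := Finset.univ.sup' Finset.univ_nonempty
    (fun a : A => r s a + γ * ∑ s', q s a s' * V s') with hC
  refine ⟨M + C, ?_⟩
  rintro x ⟨d, hd, rfl⟩
  haveI := hprob s d hd
  have hint1 := bellman_integrand_integrable r q γ Ξ hprob hint V s hd
  have hint2 : Integrable (fun ε : A → ℝ =>
      Finset.univ.sup' Finset.univ_nonempty (fun a : A => ε a)) d :=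
    integrable_finset_sup' Finset.univ_nonempty (fun a _ => hint s d hd a)
  have hpt : ∀ ε : A → ℝ,
      Finset.univ.sup' Finset.univ_nonempty
        (fun a : A => r s a + ε a + γ * ∑ s', q s a s' * V s')
      ≤ (Finset.univ.sup' Finset.univ_nonempty (fun a : A => ε a)) + C := by
    intro ε
    refine Finset.sup'_le _ _ (fun a _ => ?_)
    have h1 : ε a ≤ Finset.univ.sup' Finset.univ_nonempty (fun a : A => ε a) :=
      Finset.le_sup' _ (Finset.mem_univ a)
    have h2 : r s a + γ * ∑ s', q s a s' * V s' ≤ C := by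
      rw [hC]
      exact Finset.le_sup' (fun a : A => r s a + γ * ∑ s', q s a s' * V s')
        (Finset.mem_univ a)
    linarith
  calc ∫ ε, (Finset.univ.sup' Finset.univ_nonempty
        (fun a : A => r s a + ε a + γ * ∑ s', q s a s' * V s')) ∂d
      ≤ ∫ ε, ((Finset.univ.sup' Finset.univ_nonempty (fun a : A => ε a)) + C) ∂d :=
        integral_mono hint1 (hint2.add (integrable_const _)) hpt
    _ = (∫ ε, (Finset.univ.sup' Finset.univ_nonempty (fun a : A => ε a)) ∂d) + C := by
        rw [integral_add hint2 (integrable_const _)]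
        simp
    _ ≤ M + C := by linarith [hM d hd]

/-- One-sided Lipschitz estimate for the Bellman operator. -/
lemma bellman_le
    (hq0 : ∀ s a s', 0 ≤ q s a s') (hq1 : ∀ s a, ∑ s', q s a s' = 1)
    (hγ0 : 0 ≤ γ)
    (hne : ∀ s, (Ξ s).Nonempty)
    (hprob : ∀ s, ∀ d ∈ Ξ s, IsProbabilityMeasure d)
    (hint : ∀ s, ∀ d ∈ Ξ s, ∀ a : A, Integrable (fun ε : A → ℝ => ε a) d)
    (hbdd : ∀ s, ∃ M : ℝ, ∀ d ∈ Ξ s,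
      ∫ ε, (Finset.univ.sup' Finset.univ_nonempty (fun a : A => ε a)) ∂d ≤ M)
    (V W : S → ℝ) (D : ℝ) (hVW : ∀ s', |V s' - W s'| ≤ D) (s : S) :
    bellmanDS r q γ Ξ V s ≤ bellmanDS r q γ Ξ W s + γ * D := by
  unfold bellmanDS
  refine csSup_le ((hne s).image _) ?_
  rintro x ⟨d, hd, rfl⟩
  haveI := hprob s d hd
  have hiV := bellman_integrand_integrable r q γ Ξ hprob hint V s hd
  have hiW := bellman_integrand_integrable r q γ Ξ hprob hint W s hd
  have hpt : ∀ ε : A → ℝ,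
      Finset.univ.sup' Finset.univ_nonempty
        (fun a : A => r s a + ε a + γ * ∑ s', q s a s' * V s')
      ≤ (Finset.univ.sup' Finset.univ_nonempty
        (fun a : A => r s a + ε a + γ * ∑ s', q s a s' * W s')) + γ * D := by
    intro ε
    refine Finset.sup'_le _ _ (fun a _ => ?_)
    have hsum : ∑ s', q s a s' * V s' ≤ (∑ s', q s a s' * W s') + D := by
      have : ∑ s', q s a s' * V s' ≤ ∑ s', (q s a s' * W s' + q s a s' * D) := by
        refine Finset.sum_le_sum (fun s' _ => ?_)
        have habs := hVW s'
        have := abs_le.mp habs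
        nlinarith [hq0 s a s']
      calc ∑ s', q s a s' * V s' ≤ ∑ s', (q s a s' * W s' + q s a s' * D) := this
        _ = (∑ s', q s a s' * W s') + (∑ s', q s a s') * D := by
            rw [Finset.sum_add_distrib, Finset.sum_mul]
        _ = (∑ s', q s a s' * W s') + D := by rw [hq1 s a]; ring
    have h2 : r s a + ε a + γ * ∑ s', q s a s' * W s'
        ≤ Finset.univ.sup' Finset.univ_nonempty
          (fun a : A => r s a + ε a + γ * ∑ s', q s a s' * W s') :=
      Finset.le_sup' (fun a : A => r s a + ε a + γ * ∑ s', q s a s' * W s')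
        (Finset.mem_univ a)
    nlinarith
  have hD0 : 0 ≤ D := le_trans (abs_nonneg _) (hVW (Classical.arbitrary S))
  have step1 : (∫ ε, (Finset.univ.sup' Finset.univ_nonempty
        (fun a : A => r s a + ε a + γ * ∑ s', q s a s' * V s')) ∂d)
      ≤ (∫ ε, (Finset.univ.sup' Finset.univ_nonempty
        (fun a : A => r s a + ε a + γ * ∑ s', q s a s' * W s')) ∂d) + γ * D := by
    calc (∫ ε, (Finset.univ.sup' Finset.univ_nonempty
        (fun a : A => r s a + ε a + γ * ∑ s', q s a s' * V s')) ∂d)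
        ≤ ∫ ε, ((Finset.univ.sup' Finset.univ_nonempty
          (fun a : A => r s a + ε a + γ * ∑ s', q s a s' * W s')) + γ * D) ∂d :=
          integral_mono hiV (hiW.add (integrable_const _)) hpt
      _ = _ := by rw [integral_add hiW (integrable_const _)]; simp
  have step2 : (∫ ε, (Finset.univ.sup' Finset.univ_nonempty
        (fun a : A => r s a + ε a + γ * ∑ s', q s a s' * W s')) ∂d)
      ≤ sSup ((fun d : Measure (A → ℝ) =>
        ∫ ε, (Finset.univ.sup' Finset.univ_nonempty
          (fun a : A => r s a + ε a + γ * ∑ s', q s a s' * W s')) ∂d) '' Ξ s) :=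
    le_csSup (bellman_bddAbove r q γ Ξ hprob hint hbdd W s) ⟨d, hd, rfl⟩
  linarith

end Aux

/-- existence and uniqueness of the fixed point of the Bellman equation. -/
theorem bellmanDS_unique_fixed_point {S A : Type*} [Fintype S] [Nonempty S] [Fintype A] [Nonempty A]
    (r : S → A → ℝ) (q : S → A → S → ℝ)
    (hq0 : ∀ s a s', 0 ≤ q s a s') (hq1 : ∀ s a, ∑ s', q s a s' = 1)
    (γ : ℝ) (hγ0 : 0 ≤ γ) (hγ1 : γ < 1)
    (Ξ : S → Set (Measure (A → ℝ)))
    (hne : ∀ s, (Ξ s).Nonempty)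
    (hprob : ∀ s, ∀ d ∈ Ξ s, IsProbabilityMeasure d)
    (hint : ∀ s, ∀ d ∈ Ξ s, ∀ a : A, Integrable (fun ε : A → ℝ => ε a) d)
    (hbdd : ∀ s, ∃ M : ℝ, ∀ d ∈ Ξ s,
      ∫ ε, (Finset.univ.sup' Finset.univ_nonempty (fun a : A => ε a)) ∂d ≤ M)
    :
    ∃! V : S → ℝ, ∀ s, bellmanDS r q γ Ξ V s = V s := by
  set T : (S → ℝ) → (S → ℝ) := bellmanDS r q γ Ξ with hT
  have key : ∀ V W : S → ℝ, ∀ s, |T V s - T W s| ≤ γ * dist V W := by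
    intro V W s
    have hVW : ∀ s', |V s' - W s'| ≤ dist V W := by
      intro s'
      have := dist_le_pi_dist V W s'
      rwa [Real.dist_eq] at this
    have h1 := bellman_le r q γ Ξ hq0 hq1 hγ0 hne hprob hint hbdd V W (dist V W) hVW s
    have h2 := bellman_le r q γ Ξ hq0 hq1 hγ0 hne hprob hint hbdd W V (dist V W)
      (fun s' => by rw [abs_sub_comm]; exact hVW s') s
    rw [abs_le]; constructor <;> [linarith; linarith]
  have hK : (⟨γ, hγ0⟩ : NNReal) < 1 := by
    exact (NNReal.coe_lt_coe (r₁ := ⟨γ, hγ0⟩) (r₂ := 1)).mp hγ1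
  have hlip : LipschitzWith ⟨γ, hγ0⟩ T := by
    refine LipschitzWith.of_dist_le_mul (fun V W => ?_)
    rw [dist_pi_le_iff (by positivity)]
    intro s
    rw [Real.dist_eq]
    exact key V W s
  have hcontr : ContractingWith ⟨γ, hγ0⟩ T := ⟨hK, hlip⟩
  refine ⟨hcontr.fixedPoint T, ?_, ?_⟩
  · intro s
    have := hcontr.fixedPoint_isFixedPt
    exact congrFun this s
  · intro V hV
    exact hcontr.fixedPoint_unique (funext hV)
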